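/- arXiv:1804.06499 — 2 statements merged into one kernel-verified Lean document; each statement's English description precedes it below -/
import Mathlib

section
/- Let (X, d) be a metric space carrying a Borel measure μ that is Ahlfors regular of dimension δ > 0 with constant C (i.e., C⁻¹ r^δ ≤ μ(B(x,r)) ≤ C r^δ for all x ∈ X and 0 < r ≤ r₀). Then there is a constant c > 0, depending only on C and δ, such that for every closed ball B ⊆ X of radius ρ ≤ r₀ and every 0 < α ≤ 1/2, there exist at least c·α^{−δ} points x₁,…,x_I in B, each at distance at least α·ρ from the boundary sphere of B (i.e., each B(x_i, αρ) ⊆ B), with pairwise distances d(x_i, x_j) ≥ 3αρ for i ≠ j. -/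
/-!
Take a maximal `3αρ`-separated subset of the half ball `B(x₀, ρ/2)`; the `αρ`-balls around its
points stay inside `B(x₀, ρ)`. By maximality the `3αρ`-balls around it cover the half ball, so
when `3αρ ≤ ρ/2` the lower Ahlfors bound for `B(x₀, ρ/2)` against the upper bounds for the small
balls shows that it has at least `C⁻² (6α)^(-δ)` points. When `6α > 1` one point suffices, since
comparing the two Ahlfors bounds on a single ball forces `C ≥ 1`.
-/

open Metric MeasureTheory ENNReal NNReal

namespace Metric

variable {X : Type*} [PseudoMetricSpace X]

theorem measure_le_coveringNumber_mul [MeasurableSpace X] (μ : Measure X) {ε : ℝ≥0} {A : Set X}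
    {M : ℝ≥0∞} (hM : M ≠ 0) (hball : ∀ x ∈ A, μ (closedBall x ε) ≤ M) :
    μ A ≤ coveringNumber ε A * M := by
  by_cases htop : coveringNumber ε A = ⊤
  · simp [htop, hM]
  obtain ⟨N, hNA, hNfin, hcover, hcard⟩ := exists_set_encard_eq_coveringNumber htop
  rw [← hcard, hNfin.encard_eq_coe_toFinset_card]
  calc μ A ≤ μ (⋃ y ∈ hNfin.toFinset, closedBall y ε) := by
        simpa using measure_mono hcover.subset_iUnion_closedBall
    _ ≤ ∑ y ∈ hNfin.toFinset, μ (closedBall y ε) := measure_biUnion_finset_le _ _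
    _ ≤ hNfin.toFinset.card * M := by
        simpa using Finset.sum_le_card_nsmul _ _ _ fun y hy => hball y (hNA (by simpa using hy))

theorem ceil_div_le_coveringNumber [MeasurableSpace X] {μ : Measure X} {ε : ℝ≥0} {A : Set X}
    {a b : ℝ} (hb : 0 < b) (hA : ENNReal.ofReal a ≤ μ A)
    (hball : ∀ x ∈ A, μ (closedBall x ε) ≤ ENNReal.ofReal b) :
    (⌈a / b⌉₊ : ℕ∞) ≤ coveringNumber ε A := by
  have h := hA.trans (measure_le_coveringNumber_mul μ (ENNReal.ofReal_pos.2 hb).ne' hball)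
  generalize coveringNumber ε A = k at h ⊢
  induction k using ENat.recTopCoe with
  | top => exact le_top
  | coe k =>
    rw [ENat.toENNReal_coe, ← ENNReal.ofReal_natCast, ← ENNReal.ofReal_mul (by positivity),
      ENNReal.ofReal_le_ofReal_iff (by positivity)] at h
    exact_mod_cast Nat.ceil_le.2 ((div_le_iff₀ hb).2 (by linarith))

theorem exists_fin_isSeparated_of_le_packingNumber {ε : ℝ≥0} {A : Set X} {n : ℕ}
    (h : n ≤ packingNumber ε A) :
    ∃ pts : Fin n → X, (∀ i, pts i ∈ A) ∧ ∀ i j, i ≠ j → (ε : ℝ) < dist (pts i) (pts j) := by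
  obtain ⟨S, hSA, hSsep, hScard⟩ : ∃ S ⊆ A, IsSeparated ε S ∧ n ≤ S.encard := by
    by_cases htop : packingNumber ε A = ⊤
    · have hlt : (n : ℕ∞) < packingNumber ε A := htop ▸ ENat.natCast_lt_top n
      simp only [packingNumber, lt_iSup_iff] at hlt
      obtain ⟨S, hSA, hSsep, hS⟩ := hlt
      exact ⟨S, hSA, hSsep, hS.le⟩
    · exact ⟨_, maximalSeparatedSet_subset, isSeparated_maximalSeparatedSet,
        (encard_maximalSeparatedSet htop).symm ▸ h⟩
  obtain ⟨T, hTS, hTcard⟩ := Set.exists_subset_encard_eq hScard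
  have : Finite T := Set.finite_of_encard_eq_coe hTcard
  let e : T ≃ Fin n := Finite.equivFinOfCardEq <| by
    rw [Nat.card_coe_set_eq, Set.ncard_def, hTcard, ENat.toNat_natCast]
  refine ⟨fun i => e.symm i, fun i => hSA (hTS (e.symm i).2), fun i j hij => ?_⟩
  have h : (ε : ℝ≥0∞) < edist (e.symm i : X) (e.symm j) :=
    hSsep (hTS (e.symm i).2) (hTS (e.symm j).2) fun h => hij (e.symm.injective (Subtype.ext h))
  rw [edist_nndist, ENNReal.coe_lt_coe] at h
  exact_mod_cast h

end Metric

section AhlforsRegular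

variable {X : Type*} [PseudoMetricSpace X] [MeasurableSpace X]

def IsAhlforsRegular (μ : Measure X) (C δ r₀ : ℝ) : Prop :=
  ∀ (x : X) (r : ℝ), 0 < r → r ≤ r₀ →
    ENNReal.ofReal (C⁻¹ * r ^ δ) ≤ μ (closedBall x r) ∧
      μ (closedBall x r) ≤ ENNReal.ofReal (C * r ^ δ)

variable {μ : Measure X} {C δ r₀ : ℝ}

theorem IsAhlforsRegular.one_le (h : IsAhlforsRegular μ C δ r₀) (hC : 0 < C) (x : X) {r : ℝ}
    (hr : 0 < r) (hrr₀ : r ≤ r₀) : 1 ≤ C := by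
  have hrδ : 0 < r ^ δ := Real.rpow_pos_of_pos hr δ
  have hle := (h x r hr hrr₀).1.trans (h x r hr hrr₀).2
  rw [ENNReal.ofReal_le_ofReal_iff (by positivity), mul_le_mul_iff_left₀ hrδ,
    inv_le_iff_one_le_mul₀ hC] at hle
  nlinarith

theorem IsAhlforsRegular.ceil_le_packingNumber (h : IsAhlforsRegular μ C δ r₀) (hC : 0 < C)
    (hδ : 0 ≤ δ) (x₀ : X) {ρ α : ℝ} (hρ : 0 < ρ) (hρr₀ : ρ ≤ r₀) (hα : 0 < α) :
    (⌈(C ^ 2 * (6 * α) ^ δ)⁻¹⌉₊ : ℕ∞) ≤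
      packingNumber ⟨3 * α * ρ, by positivity⟩ (closedBall x₀ (ρ / 2)) := by
  rcases le_or_gt α (1 / 6) with hα6 | hα6
  · have hratio : C⁻¹ * (ρ / 2) ^ δ / (C * (3 * α * ρ) ^ δ) = (C ^ 2 * (6 * α) ^ δ)⁻¹ := by
      rw [show 3 * α * ρ = 6 * α * (ρ / 2) by ring, Real.mul_rpow (by positivity) (by positivity)]
      field_simp
    rw [← hratio]
    have hlower := (h x₀ (ρ / 2) (by positivity) (by linarith)).1
    have hupper : ∀ x, μ (closedBall x (3 * α * ρ)) ≤ ENNReal.ofReal (C * (3 * α * ρ) ^ δ) :=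
      fun x => (h x _ (by positivity) (by nlinarith)).2
    exact (ceil_div_le_coveringNumber (ε := ⟨3 * α * ρ, by positivity⟩) (by positivity) hlower
      fun x _ => hupper x).trans (coveringNumber_le_packingNumber _ _)
  · have hC1 := h.one_le hC x₀ hρ hρr₀
    have hle : (C ^ 2 * (6 * α) ^ δ)⁻¹ ≤ 1 :=
      inv_le_one_of_one_le₀ (one_le_mul_of_one_le_of_one_le (one_le_pow₀ hC1)
        (Real.one_le_rpow (by linarith) hδ))
    calc (⌈(C ^ 2 * (6 * α) ^ δ)⁻¹⌉₊ : ℕ∞) ≤ 1 := by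
          exact_mod_cast Nat.ceil_le.2 (by simpa using hle)
      _ ≤ _ := Order.one_le_iff_pos.2 <|
          packingNumber_pos_iff.2 ⟨x₀, mem_closedBall_self (by positivity)⟩

end AhlforsRegular

theorem stmt_1_general (C δ r₀ : ℝ) (hC : 0 < C) (hδ : 0 < δ) :
    ∃ c > (0 : ℝ),
      ∀ (X : Type) [MetricSpace X] [MeasurableSpace X] (μ : Measure X),
        (∀ (x : X) (r : ℝ), 0 < r → r ≤ r₀ →
          ENNReal.ofReal (C⁻¹ * r ^ δ) ≤ μ (closedBall x r) ∧
            μ (closedBall x r) ≤ ENNReal.ofReal (C * r ^ δ)) →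
        ∀ (x₀ : X) (ρ : ℝ), 0 < ρ → ρ ≤ r₀ →
          ∀ α : ℝ, 0 < α → α ≤ 1 / 2 →
            ∃ (I : ℕ) (pts : Fin I → X),
              c * α ^ (-δ) ≤ (I : ℝ) ∧
              (∀ i, closedBall (pts i) (α * ρ) ⊆ closedBall x₀ ρ) ∧
              (∀ i j, i ≠ j → 3 * α * ρ ≤ dist (pts i) (pts j)) := by
  refine ⟨(C ^ 2 * 6 ^ δ)⁻¹, by positivity, fun X _ _ μ hμ x₀ ρ hρ hρr₀ α hα hα2 => ?_⟩
  have hconst : (C ^ 2 * 6 ^ δ)⁻¹ * α ^ (-δ) = (C ^ 2 * (6 * α) ^ δ)⁻¹ := by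
    rw [Real.rpow_neg hα.le, Real.mul_rpow (by norm_num) hα.le, ← mul_assoc, ← mul_inv]
  obtain ⟨pts, hmem, hsep⟩ := exists_fin_isSeparated_of_le_packingNumber
    ((show IsAhlforsRegular μ C δ r₀ from hμ).ceil_le_packingNumber hC hδ.le x₀ hρ hρr₀ hα)
  refine ⟨_, pts, hconst ▸ Nat.le_ceil _, fun i => ?_, fun i j hij => (hsep i j hij).le⟩
  have hi := mem_closedBall.1 (hmem i)
  exact closedBall_subset_closedBall' (by nlinarith)

/-- In a metric space carrying an Ahlfors regular measure of dimension `δ` with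
constant `C` (at scales up to `r₀`), there is `c > 0`, depending only on `C` and `δ`,
such that every closed ball of radius `ρ ≤ r₀` contains at least `c * α ^ (-δ)` points
whose `α ρ`-balls are contained in the big ball and which are `3 α ρ`-separated. -/
theorem stmt_1 (C δ r₀ : ℝ) (hC : 0 < C) (hδ : 0 < δ) (hr₀ : 0 < r₀) :
    ∃ c > (0 : ℝ),
      ∀ (X : Type) [MetricSpace X] [MeasurableSpace X] (μ : Measure X),
        (∀ (x : X) (r : ℝ), 0 < r → r ≤ r₀ →
          ENNReal.ofReal (C⁻¹ * r ^ δ) ≤ μ (closedBall x r) ∧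
            μ (closedBall x r) ≤ ENNReal.ofReal (C * r ^ δ)) →
        ∀ (x₀ : X) (ρ : ℝ), 0 < ρ → ρ ≤ r₀ →
          ∀ α : ℝ, 0 < α → α ≤ 1 / 2 →
            ∃ (I : ℕ) (pts : Fin I → X),
              c * α ^ (-δ) ≤ (I : ℝ) ∧
              (∀ i, closedBall (pts i) (α * ρ) ⊆ closedBall x₀ ρ) ∧
              (∀ i j, i ≠ j → 3 * α * ρ ≤ dist (pts i) (pts j)) :=
  stmt_1_general C δ r₀ hC hδ
end

section
/- Let (X,d) be a metric space, K ⊆ X a closed set that is β diffuse for some 0 < β < 1 with constant r₀, i.e., for every x ∈ K, y ∈ X and 0 < r ≤ r₀ we have (B(x,(1−β)r) \ B(y,2βr)) ∩ K ≠ ∅. Then for every x ∈ K and 0 < r ≤ r₀ there exist two points z₁, z₂ ∈ K such that the closed balls B(z₁, βr) and B(z₂, βr) are disjoint and both contained in B(x, r). -/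
open Metric Set

/-- If a closed set `K` is `β` diffuse with constant `r₀`, then every point `x ∈ K`
and scale `0 < r ≤ r₀` admit two points `z₁ z₂ ∈ K` whose closed `βr`-balls are
disjoint and contained in `B(x, r)`. -/
theorem stmt_3 {X : Type*} [MetricSpace X] (K : Set X) (hK : IsClosed K)
    (β r₀ : ℝ) (hβ0 : 0 < β) (hβ1 : β < 1) (hr₀ : 0 < r₀)
    (hdiff : ∀ x ∈ K, ∀ (y : X) (r : ℝ), 0 < r → r ≤ r₀ →
      ((closedBall x ((1 - β) * r) \ closedBall y (2 * β * r)) ∩ K).Nonempty) :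
    ∀ x ∈ K, ∀ r : ℝ, 0 < r → r ≤ r₀ →
      ∃ z₁ ∈ K, ∃ z₂ ∈ K,
        Disjoint (closedBall z₁ (β * r)) (closedBall z₂ (β * r)) ∧
        closedBall z₁ (β * r) ⊆ closedBall x r ∧
        closedBall z₂ (β * r) ⊆ closedBall x r := by
  intro x hx r hr hrr₀
  obtain ⟨z₁, ⟨hz₁b, -⟩, hz₁K⟩ := hdiff x hx x r hr hrr₀
  obtain ⟨z₂, ⟨hz₂b, hz₂n⟩, hz₂K⟩ := hdiff x hx z₁ r hr hrr₀
  refine ⟨z₁, hz₁K, z₂, hz₂K, ?_, ?_, ?_⟩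
  · apply closedBall_disjoint_closedBall
    rw [mem_closedBall, not_le, dist_comm] at hz₂n
    linarith
  · intro w hw
    rw [mem_closedBall] at *
    calc dist w x ≤ dist w z₁ + dist z₁ x := dist_triangle _ _ _
      _ ≤ β * r + (1 - β) * r := add_le_add hw hz₁b
      _ = r := by ring
  · intro w hw
    rw [mem_closedBall] at *
    calc dist w x ≤ dist w z₂ + dist z₂ x := dist_triangle _ _ _
      _ ≤ β * r + (1 - β) * r := add_le_add hw hz₂b
      _ = r := by ring
end
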